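/- arXiv:1910.12742 — 8 statements merged into one kernel-verified Lean document; each statement's English description precedes it below -/
import Mathlib

section
/- Let m > 0. Then the limit as t → ∞ of (∫_0^∞ (u² + t²)^{-1/4} e^{-m√(u²+t²)} du) / e^{-mt} exists and equals √(π/(2m)). -/
open MeasureTheory Filter Real Set

/-!
Substituting `u = √t v` turns the quotient into `∫_0^∞ G t v dv` with
`G = rescaledIntegrand m`: rationalising `m (√(u² + t²) - t)` gives `G t v = (1 + v²/t)^{-1/4} exp(-m v² / (√(1 + v²/t) + 1))`.
As `t → ∞`, `G t v → exp(-m v²/2)`, and for `t ≥ 1` it is dominated by `exp(-m (v - 2))`,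
so dominated convergence reduces the limit to the half-line Gaussian integral `√(π/(2m))`.
-/

noncomputable def rescaledIntegrand (m t v : ℝ) : ℝ :=
  (v ^ 2 / t + 1) ^ (-(1/4) : ℝ) * exp (-m * (v ^ 2 / (sqrt (v ^ 2 / t + 1) + 1)))

lemma sqrt_add_one_sub_one {s : ℝ} (hs : 0 ≤ s) :
    sqrt (s + 1) - 1 = s / (sqrt (s + 1) + 1) := by
  have hpos : 0 < sqrt (s + 1) + 1 := by positivity
  rw [eq_div_iff hpos.ne']
  linear_combination Real.mul_self_sqrt (by linarith : (0:ℝ) ≤ s + 1)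

lemma sqrt_mul_integrand_div_exp_eq_rescaledIntegrand {m t : ℝ} (ht : 0 < t) (v : ℝ) :
    sqrt t * (((sqrt t * v) ^ 2 + t ^ 2) ^ (-(1/4) : ℝ)
        * exp (-m * sqrt ((sqrt t * v) ^ 2 + t ^ 2))) / exp (-m * t)
      = rescaledIntegrand m t v := by
  have hbase : (sqrt t * v) ^ 2 + t ^ 2 = t ^ 2 * (v ^ 2 / t + 1) := by
    rw [mul_pow, Real.sq_sqrt ht.le]; field_simp
  have hs : 0 ≤ v ^ 2 / t := by positivity
  have hrpow : (t ^ 2) ^ (-(1/4) : ℝ) = (sqrt t)⁻¹ := by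
    rw [← Real.rpow_natCast t 2, ← Real.rpow_mul ht.le, Real.sqrt_eq_rpow,
      ← Real.rpow_neg ht.le]
    norm_num
  have hexp : -m * (t * sqrt (v ^ 2 / t + 1))
      = -m * (v ^ 2 / (sqrt (v ^ 2 / t + 1) + 1)) + -m * t := by
    have hrat : v ^ 2 / (sqrt (v ^ 2 / t + 1) + 1) = t * (sqrt (v ^ 2 / t + 1) - 1) := by
      rw [sqrt_add_one_sub_one hs]; field_simp
    rw [hrat]; ring
  rw [hbase, Real.mul_rpow (sq_nonneg t) (by positivity), hrpow,
    Real.sqrt_mul (sq_nonneg t), Real.sqrt_sq ht.le, hexp, Real.exp_add, rescaledIntegrand]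
  have : sqrt t ≠ 0 := (Real.sqrt_pos.mpr ht).ne'
  field_simp

lemma measurable_rescaledIntegrand (m t : ℝ) : Measurable (rescaledIntegrand m t) := by
  unfold rescaledIntegrand; fun_prop

lemma norm_rescaledIntegrand_le {m t v : ℝ} (hm : 0 ≤ m) (ht : 1 ≤ t) (hv : 0 ≤ v) :
    ‖rescaledIntegrand m t v‖ ≤ exp (2 * m) * exp (-m * v) := by
  have hs : 0 ≤ v ^ 2 / t := by positivity
  have hsqrt : sqrt (v ^ 2 / t + 1) + 1 ≤ v + 2 := by
    have : sqrt (v ^ 2 / t + 1) ≤ v + 1 := by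
      rw [Real.sqrt_le_left (by linarith)]
      nlinarith [div_le_self (sq_nonneg v) ht]
    linarith
  have hrat : v - 2 ≤ v ^ 2 / (sqrt (v ^ 2 / t + 1) + 1) :=
    calc v - 2 ≤ v ^ 2 / (v + 2) := by rw [le_div_iff₀ (by positivity)]; nlinarith
      _ ≤ v ^ 2 / (sqrt (v ^ 2 / t + 1) + 1) := by gcongr
  have hpow : (v ^ 2 / t + 1) ^ (-(1/4) : ℝ) ≤ 1 :=
    Real.rpow_le_one_of_one_le_of_nonpos (by linarith) (by norm_num)
  rw [rescaledIntegrand, Real.norm_of_nonneg (by positivity)]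
  calc _ ≤ exp (-m * (v ^ 2 / (sqrt (v ^ 2 / t + 1) + 1))) :=
        mul_le_of_le_one_left (exp_nonneg _) hpow
    _ ≤ exp (2 * m) * exp (-m * v) := by rw [← exp_add]; exact exp_le_exp.mpr (by nlinarith)

lemma tendsto_rescaledIntegrand (m v : ℝ) :
    Tendsto (fun t => rescaledIntegrand m t v) atTop (nhds (exp (-(m / 2) * v ^ 2))) := by
  have hs : Tendsto (fun t : ℝ => v ^ 2 / t + 1) atTop (nhds 1) := by
    simpa using (tendsto_const_nhds.div_atTop tendsto_id).add_const (1 : ℝ)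
  have hrat : Tendsto (fun t => v ^ 2 / (sqrt (v ^ 2 / t + 1) + 1)) atTop (nhds (v ^ 2 / 2)) := by
    have : Tendsto (fun t => v ^ 2 / (sqrt (v ^ 2 / t + 1) + 1)) atTop
        (nhds (v ^ 2 / (sqrt 1 + 1))) :=
      tendsto_const_nhds.div (((continuous_sqrt.tendsto 1).comp hs).add_const 1) (by positivity)
    rwa [sqrt_one, one_add_one_eq_two] at this
  have hlim := (hs.rpow_const (p := -(1/4)) (Or.inl one_ne_zero)).mul (hrat.const_mul (-m)).rexp
  unfold rescaledIntegrand
  convert hlim using 2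
  rw [one_rpow, one_mul]
  ring_nf

lemma tendsto_integral_rescaledIntegrand {m : ℝ} (hm : 0 < m) :
    Tendsto (fun t => ∫ v in Ioi 0, rescaledIntegrand m t v) atTop
      (nhds (∫ v in Ioi 0, exp (-(m / 2) * v ^ 2))) := by
  refine tendsto_integral_filter_of_dominated_convergence (fun v => exp (2 * m) * exp (-m * v))
    (.of_forall fun t => (measurable_rescaledIntegrand m t).aestronglyMeasurable) ?_
    ((exp_neg_integrableOn_Ioi 0 hm).const_mul _)
    (.of_forall fun v => tendsto_rescaledIntegrand m v)
  filter_upwards [eventually_ge_atTop 1] with t ht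
  filter_upwards [self_mem_ae_restrict measurableSet_Ioi] with v hv
  exact norm_rescaledIntegrand_le hm.le ht hv.le

lemma integral_div_exp_eq_integral_rescaledIntegrand (m : ℝ) {t : ℝ} (ht : 0 < t) :
    (∫ u in Ioi (0:ℝ), (u ^ 2 + t ^ 2) ^ (-(1/4) : ℝ) * exp (-m * sqrt (u ^ 2 + t ^ 2))) /
        exp (-m * t) = ∫ v in Ioi 0, rescaledIntegrand m t v := by
  have hst : 0 < sqrt t := Real.sqrt_pos.mpr ht
  have hsubst := integral_comp_mul_left_Ioi'
    (fun u => (u ^ 2 + t ^ 2) ^ (-(1/4) : ℝ) * exp (-m * sqrt (u ^ 2 + t ^ 2))) 0 hst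
  rw [mul_zero] at hsubst
  rw [← hsubst, smul_eq_mul, ← integral_const_mul, ← integral_div]
  exact setIntegral_congr_fun measurableSet_Ioi fun v _ =>
    sqrt_mul_integrand_div_exp_eq_rescaledIntegrand ht v

lemma integral_exp_neg_half_mul_sq_Ioi (m : ℝ) :
    ∫ v in Ioi (0:ℝ), exp (-(m / 2) * v ^ 2) = sqrt (π / (2 * m)) := by
  rw [integral_gaussian_Ioi, show π / (m / 2) = 2 ^ 2 * (π / (2 * m)) by field_simp,
    sqrt_mul (by norm_num), sqrt_sq (by norm_num)]
  ring

/-- Lemma B (first limit): for `m > 0`,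
`(∫_0^∞ (u² + t²)^{-1/4} e^{-m√(u²+t²)} du) / e^{-mt} → √(π/(2m))` as `t → ∞`. -/
theorem stmt0 (m : ℝ) (hm : 0 < m) :
    Tendsto (fun t : ℝ =>
        (∫ u in Ioi (0:ℝ), (u ^ 2 + t ^ 2) ^ (-(1/4) : ℝ) * exp (-m * sqrt (u ^ 2 + t ^ 2))) /
          exp (-m * t))
      atTop (nhds (sqrt (π / (2 * m)))) := by
  rw [← integral_exp_neg_half_mul_sq_Ioi]
  refine (tendsto_integral_rescaledIntegrand hm).congr' ?_
  filter_upwards [eventually_gt_atTop 0] with t ht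
  exact (integral_div_exp_eq_integral_rescaledIntegrand m ht).symm
end

section
/- Let m > 0 and let α, β be real numbers with 0 < β < 1/2 < α < 3/4. Then the limit as t → ∞ of (∫_{t^β}^{t^α} e^{-m√(u²+t²)} du) / (t^{1/2} e^{-mt}) exists and equals √(π/(2m)). -/
open MeasureTheory Filter Real Set intervalIntegral Topology

/-!
Substituting `u = √t v` turns the quotient into
`∫_{t^(β-1/2)}^{t^(α-1/2)} e^{-m(√(t v² + t²) - t)} dv`. Since `√(t v² + t²) - t → v²/2`,
the integrand tends to `e^{-m v²/2}`, and because the upper limit `t^(α-1/2)` stays below `√t`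
it is dominated by `e^{-m v²/3}`. Dominated convergence leaves the half Gaussian integral
`∫_0^∞ e^{-m v²/2} dv = √(π/(2m))`.
-/

theorem tendsto_intervalIntegral_of_dominated_Ioi {ι E : Type*} [NormedAddCommGroup E]
    [NormedSpace ℝ E] {l : Filter ι} [l.IsCountablyGenerated] {a b : ι → ℝ} {c : ℝ}
    {F : ι → ℝ → E} {f : ℝ → E} {bound : ℝ → ℝ}
    (ha : Tendsto a l (𝓝 c)) (hb : Tendsto b l atTop)
    (hF_meas : ∀ᶠ i in l, AEStronglyMeasurable (F i))
    (h_bound : ∀ᶠ i in l, ∀ v ∈ Ioc (a i) (b i), ‖F i v‖ ≤ bound v)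
    (bound_integrable : Integrable bound)
    (h_lim : ∀ v > c, Tendsto (fun i => F i v) l (𝓝 (f v))) :
    Tendsto (fun i => ∫ v in a i..b i, F i v) l (𝓝 (∫ v in Ioi c, f v)) := by
  have h_indicator : Tendsto (fun i => ∫ v, (Ioc (a i) (b i)).indicator (F i) v) l
      (𝓝 (∫ v, (Ioi c).indicator f v)) := by
    refine tendsto_integral_filter_of_dominated_convergence (fun v => ‖bound v‖)
      (hF_meas.mono fun i h => h.indicator measurableSet_Ioc) ?_ bound_integrable.norm ?_
    · filter_upwards [h_bound] with i hi
      refine ae_of_all _ fun v => ?_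
      by_cases hv : v ∈ Ioc (a i) (b i)
      · rw [indicator_of_mem hv]
        exact (hi v hv).trans (le_abs_self _)
      · rw [indicator_of_notMem hv, norm_zero]
        exact norm_nonneg _
    · filter_upwards [Measure.ae_ne volume c] with v hvc
      rcases hvc.lt_or_gt with hv | hv
      · have h_out : ∀ᶠ i in l, v ∉ Ioc (a i) (b i) :=
          (ha.eventually (lt_mem_nhds hv)).mono fun i h hmem => (h.trans hmem.1).false
        rw [indicator_of_notMem (notMem_Ioi.2 hv.le)]
        exact tendsto_const_nhds.congr' (h_out.mono fun i h => (indicator_of_notMem h _).symm)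
      · have h_in : ∀ᶠ i in l, v ∈ Ioc (a i) (b i) :=
          (ha.eventually (gt_mem_nhds hv)).and (hb.eventually_ge_atTop v)
        rw [indicator_of_mem (mem_Ioi.2 hv)]
        exact (h_lim v hv).congr' (h_in.mono fun i h => (indicator_of_mem h _).symm)
  have h_le : ∀ᶠ i in l, a i ≤ b i :=
    ((ha.eventually (gt_mem_nhds (lt_add_one c))).and (hb.eventually_ge_atTop (c + 1))).mono
      fun i h => h.1.le.trans h.2
  rw [← MeasureTheory.integral_indicator measurableSet_Ioi]
  refine h_indicator.congr' (h_le.mono fun i h => ?_)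
  dsimp only
  rw [integral_of_le h, MeasureTheory.integral_indicator measurableSet_Ioc]

theorem integral_Ioi_exp_neg_half_mul_sq {m : ℝ} (hm : 0 < m) :
    ∫ v in Ioi 0, exp (-(m / 2) * v ^ 2) = √(π / (2 * m)) := by
  rw [integral_gaussian_Ioi, show π / (m / 2) = 2 ^ 2 * (π / (2 * m)) by field_simp,
    sqrt_mul (by positivity), sqrt_sq zero_le_two]
  ring

theorem tendsto_sqrt_mul_sq_add_sq_sub_self (v : ℝ) :
    Tendsto (fun t => √(t * v ^ 2 + t ^ 2) - t) atTop (𝓝 (v ^ 2 / 2)) := by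
  have h_eq : ∀ᶠ t in atTop, v ^ 2 / (√(v ^ 2 / t + 1) + 1) = √(t * v ^ 2 + t ^ 2) - t := by
    filter_upwards [eventually_gt_atTop 0] with t ht
    have h_sqrt : √(t * v ^ 2 + t ^ 2) = t * √(v ^ 2 / t + 1) := by
      rw [show t * v ^ 2 + t ^ 2 = t ^ 2 * (v ^ 2 / t + 1) by field_simp,
        sqrt_mul (by positivity), sqrt_sq ht.le]
    have h_sq : √(v ^ 2 / t + 1) ^ 2 = v ^ 2 / t + 1 := sq_sqrt (by positivity)
    rw [h_sqrt, div_eq_iff (by positivity)]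
    linear_combination (-t) * h_sq - mul_div_cancel₀ (v ^ 2) ht.ne'
  have h_denom : Tendsto (fun t => √(v ^ 2 / t + 1) + 1) atTop (𝓝 (√(0 + 1) + 1)) :=
    (((tendsto_const_nhds.div_atTop tendsto_id).add_const 1).sqrt).add_const 1
  rw [zero_add, sqrt_one, one_add_one_eq_two] at h_denom
  exact (tendsto_const_nhds.div h_denom two_ne_zero).congr' h_eq

theorem sq_div_three_le_sqrt_mul_sq_add_sq_sub_self {t v : ℝ} (ht : 0 ≤ t) (hv : v ^ 2 ≤ t) :
    v ^ 2 / 3 ≤ √(t * v ^ 2 + t ^ 2) - t := by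
  have h_sq : √(t * v ^ 2 + t ^ 2) ^ 2 = t * v ^ 2 + t ^ 2 := sq_sqrt (by positivity)
  nlinarith [sqrt_nonneg (t * v ^ 2 + t ^ 2), sq_nonneg v]

theorem integral_exp_neg_mul_sqrt_sq_add_sq_comp_mul_sqrt (m a b : ℝ) {t : ℝ} (ht : 0 ≤ t) :
    ∫ u in √t * a..√t * b, exp (-m * √(u ^ 2 + t ^ 2)) =
      √t * exp (-m * t) * ∫ v in a..b, exp (-(m * (√(t * v ^ 2 + t ^ 2) - t))) := by
  rw [← smul_integral_comp_mul_left (fun u => exp (-m * √(u ^ 2 + t ^ 2))), smul_eq_mul,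
    mul_assoc]
  congr 1
  rw [← intervalIntegral.integral_const_mul]
  refine intervalIntegral.integral_congr fun v _ => ?_
  rw [← exp_add, mul_pow, sq_sqrt ht]
  ring_nf

theorem tendsto_integral_exp_neg_mul_sqrt_mul_sq_add_sq_sub_self {m γ δ : ℝ} (hm : 0 < m)
    (hγ : γ < 0) (hδ : 0 < δ) (hδ_le : δ ≤ 1 / 2) :
    Tendsto (fun t => ∫ v in t ^ γ..t ^ δ, exp (-(m * (√(t * v ^ 2 + t ^ 2) - t)))) atTop
      (𝓝 √(π / (2 * m))) := by
  rw [← integral_Ioi_exp_neg_half_mul_sq hm]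
  refine tendsto_intervalIntegral_of_dominated_Ioi (bound := fun v => exp (-(m / 3) * v ^ 2))
    (by simpa using tendsto_rpow_neg_atTop (neg_pos.2 hγ)) (tendsto_rpow_atTop hδ)
    (Eventually.of_forall fun t => (by fun_prop : Continuous _).aestronglyMeasurable) ?_
    (integrable_exp_neg_mul_sq (by positivity)) fun v _ => ?_
  · filter_upwards [eventually_ge_atTop 1] with t ht v ⟨hv_pos, hv_le⟩
    have hv_sq : v ^ 2 ≤ t := by
      have h_le_sqrt : v ≤ √t := by
        rw [sqrt_eq_rpow]
        exact hv_le.trans (rpow_le_rpow_of_exponent_le ht hδ_le)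
      exact (le_sqrt ((rpow_nonneg (by linarith) _).trans hv_pos.le) (by linarith)).1 h_le_sqrt
    rw [norm_of_nonneg (exp_pos _).le, exp_le_exp]
    nlinarith [sq_div_three_le_sqrt_mul_sq_add_sq_sub_self (by linarith) hv_sq]
  · rw [show -(m / 2) * v ^ 2 = -(m * (v ^ 2 / 2)) by ring]
    exact ((tendsto_sqrt_mul_sq_add_sq_sub_self v).const_mul m).neg.rexp

theorem stmt1_general (m α β : ℝ) (hm : 0 < m) (hβhalf : β < 1/2)
    (hhalfα : 1/2 < α) (hα : α < 3/4) :
    Tendsto (fun t : ℝ =>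
        (∫ u in (t ^ β)..(t ^ α), exp (-m * sqrt (u ^ 2 + t ^ 2))) /
          (t ^ ((1:ℝ)/2) * exp (-m * t)))
      atTop (nhds (sqrt (π / (2 * m)))) := by
  refine (tendsto_integral_exp_neg_mul_sqrt_mul_sq_add_sq_sub_self (γ := β - 1 / 2)
    (δ := α - 1 / 2) hm (by linarith) (by linarith) (by linarith)).congr' ?_
  filter_upwards [eventually_gt_atTop 0] with t ht
  have h_rpow : ∀ γ : ℝ, t ^ γ = √t * t ^ (γ - 1 / 2) := fun γ => by
    rw [sqrt_eq_rpow, ← rpow_add ht, add_sub_cancel]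
  rw [h_rpow β, h_rpow α, integral_exp_neg_mul_sqrt_sq_add_sq_comp_mul_sqrt m _ _ ht.le,
    ← sqrt_eq_rpow, mul_div_cancel_left₀ _ (by positivity)]

/-- Lemma B (second limit): for `m > 0` and `0 < β < 1/2 < α < 3/4`,
`(∫_{t^β}^{t^α} e^{-m√(u²+t²)} du) / (t^{1/2} e^{-mt}) → √(π/(2m))` as `t → ∞`. -/
theorem stmt1 (m α β : ℝ) (hm : 0 < m) (hβ : 0 < β) (hβhalf : β < 1/2)
    (hhalfα : 1/2 < α) (hα : α < 3/4) :
    Tendsto (fun t : ℝ =>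
        (∫ u in (t ^ β)..(t ^ α), exp (-m * sqrt (u ^ 2 + t ^ 2))) /
          (t ^ ((1:ℝ)/2) * exp (-m * t)))
      atTop (nhds (sqrt (π / (2 * m)))) :=
  stmt1_general m α β hm hβhalf hhalfα hα
end

section
/- Let m > 0 and t > 0. Then |∫_1^∞ (1/√(y²-1) − 1/√(2(y-1))) e^{-mty} dy| ≤ (1/4) · t^{-3/2} · e^{-mt} · ∫_0^∞ w^{1/2} e^{-mw} dw. -/
open MeasureTheory Filter Real Set

/-! For `y > 1`, `1/√(2(y-1)) - 1/√(y²-1) = (√(y+1) - √2) / (√2 √(y-1) √(y+1))`, and the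
tangent line of `√` at `2` bounds the numerator by `(y-1)/(2√2)`; hence the integrand is at most
`√(y-1)/4 · e^{-mty}` in absolute value. Both `∫_1^∞ √(y-1) e^{-cy} dy = e^{-c} Γ(3/2) c^{-3/2}`
and `∫_0^∞ √w e^{-mw} dw = Γ(3/2) m^{-3/2}` are Gamma integrals, and `c = mt` gives the factor
`t^{-3/2}`. -/

theorem sqrt_sub_sqrt_le_div_two_mul_sqrt {a x : ℝ} (ha : 0 < a) (hax : a ≤ x) :
    √x - √a ≤ (x - a) / (2 * √a) := by
  have hle : √a ≤ √x := sqrt_le_sqrt hax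
  have hprod : (√x - √a) * (√x + √a) = x - a := by
    rw [mul_comm, ← sq_sub_sq, sq_sqrt (ha.le.trans hax), sq_sqrt ha.le]
  rw [le_div_iff₀ (by positivity), ← hprod]
  exact mul_le_mul_of_nonneg_left (by linarith) (by linarith)

theorem abs_one_div_sqrt_sq_sub_one_sub_le {y : ℝ} (hy : 1 < y) :
    |1 / √(y ^ 2 - 1) - 1 / √(2 * (y - 1))| ≤ √(y - 1) / 4 := by
  have hy1 : 0 < y - 1 := by linarith
  have ha : 0 < √(y - 1) := sqrt_pos.2 hy1
  have hs : 1 ≤ √2 := one_le_sqrt.2 one_le_two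
  have hb : √2 ≤ √(y + 1) := sqrt_le_sqrt (by linarith)
  have hkey := sqrt_sub_sqrt_le_div_two_mul_sqrt two_pos (by linarith : 2 ≤ y + 1)
  rw [show y + 1 - 2 = y - 1 by ring, le_div_iff₀ (by positivity), ← mul_self_sqrt hy1.le]
    at hkey
  rw [show y ^ 2 - 1 = (y - 1) * (y + 1) by ring, sqrt_mul hy1.le, sqrt_mul zero_le_two,
    abs_sub_comm, abs_of_nonneg, div_sub_div _ _ (by positivity) (by positivity),
    div_le_div_iff₀ (by positivity) four_pos]
  · have h1 := mul_le_mul_of_nonneg_left hkey (by positivity : 0 ≤ √(y - 1) * √2)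
    have h2 : √(y - 1) ^ 3 * √2 ≤ √(y - 1) ^ 3 * √2 * √(y + 1) :=
      le_mul_of_one_le_right (by positivity) (hs.trans hb)
    linear_combination h1 + h2 - 2 * √(y - 1) * (√(y + 1) - √2) * mul_self_sqrt zero_le_two
  · rw [sub_nonneg, mul_comm]
    gcongr

theorem integral_Ioi_comp_sub_self {E : Type*} [NormedAddCommGroup E] [NormedSpace ℝ E]
    (f : ℝ → E) (a : ℝ) : ∫ x in Ioi a, f (x - a) = ∫ x in Ioi 0, f x := by
  simpa [preimage_sub_const_Ioi] using
    (measurePreserving_sub_right volume a).setIntegral_preimage_emb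
      (MeasurableEquiv.subRight a).measurableEmbedding f (Ioi 0)

theorem integral_Ioi_rpow_sub_mul_exp_neg_mul {a s c : ℝ} (hs : 0 < s) (hc : 0 < c) :
    ∫ y in Ioi a, (y - a) ^ (s - 1) * exp (-(c * y))
      = exp (-(c * a)) * ((1 / c) ^ s * Gamma s) := by
  have hsplit : ∀ y, (y - a) ^ (s - 1) * exp (-(c * y))
      = exp (-(c * a)) * ((y - a) ^ (s - 1) * exp (-(c * (y - a)))) := by
    intro y
    rw [mul_left_comm, ← exp_add]
    ring_nf
  simp_rw [hsplit]
  rw [integral_const_mul, integral_Ioi_comp_sub_self (fun u ↦ u ^ (s - 1) * exp (-(c * u))),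
    integral_rpow_mul_exp_neg_mul_Ioi hs hc]

/-- `|∫_1^∞ (1/√(y²-1) − 1/√(2(y-1))) e^{-mty} dy|
      ≤ (1/4) t^{-3/2} e^{-mt} ∫_0^∞ w^{1/2} e^{-mw} dw`. -/
theorem stmt4 (m t : ℝ) (hm : 0 < m) (ht : 0 < t) :
    |∫ y in Ioi (1:ℝ), (1 / sqrt (y ^ 2 - 1) - 1 / sqrt (2 * (y - 1))) * exp (-(m * t) * y)|
      ≤ (1/4) * t ^ (-(3/2) : ℝ) * exp (-m * t) *
        ∫ w in Ioi (0:ℝ), w ^ ((1:ℝ)/2) * exp (-m * w) := by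
  have hc : 0 < m * t := mul_pos hm ht
  have hhalf : (1:ℝ) / 2 = 3 / 2 - 1 := by norm_num
  have hval := integral_Ioi_rpow_sub_mul_exp_neg_mul (a := 1) (by norm_num : (0:ℝ) < 3 / 2) hc
  have hint : IntegrableOn (fun y ↦ (y - 1) ^ ((3:ℝ) / 2 - 1) * exp (-(m * t * y))) (Ioi 1) :=
    Integrable.of_integral_ne_zero (by rw [hval]; positivity)
  have hbound : ∀ y ∈ Ioi (1:ℝ),
      ‖(1 / √(y ^ 2 - 1) - 1 / √(2 * (y - 1))) * exp (-(m * t) * y)‖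
        ≤ 1 / 4 * ((y - 1) ^ ((3:ℝ) / 2 - 1) * exp (-(m * t * y))) := by
    intro y hy
    rw [norm_mul, norm_of_nonneg (exp_pos _).le, norm_eq_abs, neg_mul, ← hhalf, ← sqrt_eq_rpow,
      ← mul_assoc, one_div_mul_eq_div]
    gcongr
    exact abs_one_div_sqrt_sq_sub_one_sub_le hy
  calc _ ≤ ∫ y in Ioi 1, 1 / 4 * ((y - 1) ^ ((3:ℝ) / 2 - 1) * exp (-(m * t * y))) :=
        norm_integral_le_of_norm_le (hint.const_mul _)
          ((ae_restrict_iff' measurableSet_Ioi).2 (Eventually.of_forall hbound))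
    _ = 1 / 4 * exp (-(m * t)) * ((1 / (m * t)) ^ ((3:ℝ) / 2) * Gamma (3 / 2)) := by
        rw [integral_const_mul, hval, mul_one, mul_assoc]
    _ = _ := by
        simp only [neg_mul, hhalf,
          integral_rpow_mul_exp_neg_mul_Ioi (by norm_num : (0:ℝ) < 3 / 2) hm]
        rw [← one_div_mul_one_div, mul_rpow (by positivity) (by positivity), one_div t,
          inv_rpow ht.le, rpow_neg ht.le]
        ring
end

section
/- Let m > 0. Then the limit as t → ∞ of (∫_{-∞}^{∞} e^{-t√(m²+p²)} / (2√(m²+p²)) dp) / (t^{-1/2} e^{-mt}) exists and equals √(π/(2m)). -/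
/-!
Push the invariant measure `dp / (2ω)` on the mass shell `ω = √(m² + p²)` forward to the energy
`ω ∈ (m, ∞)`, where it has density `1 / √(ω² - m²)`, and rescale `ω = m + s / t`. This writes the
integral as `t^(-1/2) e^(-mt) ∫₀^∞ e^(-s) / √(s (2m + s/t)) ds`. By dominated convergence, with
dominating function `e^(-s) / √(2ms)`, the last integral tends to `Γ(1/2) / √(2m) = √(π / (2m))`.
-/

open MeasureTheory Filter Real Set
open scoped Topology

theorem integral_Ioi_eq_inv_mul_integral_Ioi_comp_add_mul (G : ℝ → ℝ) (m : ℝ) {t : ℝ}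
    (ht : 0 < t) :
    ∫ v in Ioi m, G v = t⁻¹ * ∫ s in Ioi 0, G (m + t⁻¹ * s) := by
  have himage : (fun s => m + t⁻¹ * s) '' Ioi 0 = Ioi m := by
    rw [← image_image (m + ·) (t⁻¹ * ·), image_mul_left_Ioi (inv_pos.2 ht), mul_zero,
      image_const_add_Ioi, add_zero]
  have hderiv (s : ℝ) : HasDerivWithinAt (fun s => m + t⁻¹ * s) t⁻¹ (Ioi 0) s := by
    simpa using (((hasDerivAt_id s).const_mul t⁻¹).const_add m).hasDerivWithinAt
  have hinj : Function.Injective fun s => m + t⁻¹ * s :=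
    (add_right_injective m).comp (mul_right_injective₀ (inv_ne_zero ht.ne'))
  rw [← himage, integral_image_eq_integral_abs_deriv_smul measurableSet_Ioi
    (fun s _ => hderiv s) hinj.injOn, ← integral_const_mul]
  simp [abs_of_pos ht]

theorem strictMonoOn_sqrt_sq_add_sq (m : ℝ) : StrictMonoOn (fun p => √(m ^ 2 + p ^ 2)) (Ici 0) :=
  fun p hp _ _ hpq => sqrt_lt_sqrt (by positivity) (by nlinarith [mem_Ici.1 hp])

theorem image_sqrt_sq_add_sq_Ioi {m : ℝ} (hm : 0 ≤ m) :
    (fun p => √(m ^ 2 + p ^ 2)) '' Ioi 0 = Ioi m := by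
  ext v
  constructor
  · rintro ⟨p, hp, rfl⟩
    calc m = √(m ^ 2 + 0 ^ 2) := by simp [sqrt_sq hm]
      _ < √(m ^ 2 + p ^ 2) :=
        strictMonoOn_sqrt_sq_add_sq m self_mem_Ici (mem_Ici.2 (le_of_lt hp)) hp
  · intro hv
    have hv : m < v := hv
    refine ⟨√(v ^ 2 - m ^ 2), sqrt_pos.2 (by nlinarith), ?_⟩
    simp only
    rw [sq_sqrt (by nlinarith), add_sub_cancel, sqrt_sq (by linarith)]

theorem hasDerivAt_sqrt_sq_add_sq (m : ℝ) {p : ℝ} (hp : p ≠ 0) :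
    HasDerivAt (fun p => √(m ^ 2 + p ^ 2)) (p / √(m ^ 2 + p ^ 2)) p := by
  convert ((hasDerivAt_pow 2 p).const_add (m ^ 2)).sqrt (by positivity) using 1
  ring

theorem integral_div_two_sqrt_sq_add_sq (h : ℝ → ℝ) {m : ℝ} (hm : 0 ≤ m) :
    ∫ p, h √(m ^ 2 + p ^ 2) / (2 * √(m ^ 2 + p ^ 2)) = ∫ v in Ioi m, h v / √(v ^ 2 - m ^ 2) := by
  have heven : ∫ p, h √(m ^ 2 + p ^ 2) / (2 * √(m ^ 2 + p ^ 2))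
      = 2 * ∫ p in Ioi 0, h √(m ^ 2 + p ^ 2) / (2 * √(m ^ 2 + p ^ 2)) := by
    rw [← integral_comp_abs]
    simp only [sq_abs]
  have hderiv (p : ℝ) (hp : p ∈ Ioi 0) :
      HasDerivWithinAt (fun p => √(m ^ 2 + p ^ 2)) (p / √(m ^ 2 + p ^ 2)) (Ioi 0) p :=
    (hasDerivAt_sqrt_sq_add_sq m (ne_of_gt hp)).hasDerivWithinAt
  rw [heven, ← image_sqrt_sq_add_sq_Ioi hm,
    integral_image_eq_integral_abs_deriv_smul measurableSet_Ioi hderiv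
      ((strictMonoOn_sqrt_sq_add_sq m).mono Ioi_subset_Ici_self).injOn,
    ← integral_const_mul]
  refine setIntegral_congr_fun measurableSet_Ioi fun p hp => ?_
  have hp : 0 < p := hp
  have hω : 0 < √(m ^ 2 + p ^ 2) := sqrt_pos.2 (by positivity)
  rw [sq_sqrt (by positivity), add_sub_cancel_left, sqrt_sq hp.le, smul_eq_mul,
    abs_of_pos (div_pos hp hω)]
  field_simp

theorem exp_neg_div_sqrt_mul_eqOn (a : ℝ) :
    EqOn (fun s => exp (-s) / √(s * a)) (fun s => exp (-s) * s ^ ((1 / 2 : ℝ) - 1) * (√a)⁻¹)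
      (Ioi 0) := by
  intro s hs
  have hs : 0 < s := hs
  simp only
  rw [show (1 / 2 : ℝ) - 1 = -(1 / 2) by norm_num, rpow_neg hs.le, ← sqrt_eq_rpow,
    sqrt_mul hs.le]
  field_simp

theorem integrableOn_exp_neg_div_sqrt_mul (a : ℝ) :
    IntegrableOn (fun s => exp (-s) / √(s * a)) (Ioi 0) :=
  IntegrableOn.congr_fun ((GammaIntegral_convergent one_half_pos).mul_const _)
    (exp_neg_div_sqrt_mul_eqOn a).symm measurableSet_Ioi

theorem integral_exp_neg_div_sqrt_mul (a : ℝ) :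
    ∫ s in Ioi 0, exp (-s) / √(s * a) = √(π / a) := by
  rw [setIntegral_congr_fun measurableSet_Ioi (exp_neg_div_sqrt_mul_eqOn a), integral_mul_const,
    ← Gamma_eq_integral one_half_pos, Gamma_one_half_eq, sqrt_div pi_pos.le, div_eq_mul_inv]

theorem tendsto_integral_exp_neg_div_sqrt_mul_add {a : ℝ} (ha : 0 < a) :
    Tendsto (fun t => ∫ s in Ioi 0, exp (-s) / √(s * (a + t⁻¹ * s))) atTop (𝓝 √(π / a)) := by
  rw [← integral_exp_neg_div_sqrt_mul a]
  refine tendsto_integral_filter_of_dominated_convergence _ (Eventually.of_forall fun t => ?_)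
    ?_ (integrableOn_exp_neg_div_sqrt_mul a) ?_
  · have : Measurable fun s => exp (-s) / √(s * (a + t⁻¹ * s)) := by fun_prop
    exact this.aestronglyMeasurable
  · filter_upwards [eventually_gt_atTop 0] with t ht
    refine (ae_restrict_iff' measurableSet_Ioi).2 (ae_of_all _ fun s hs => ?_)
    have hs : 0 < s := hs
    rw [norm_of_nonneg (by positivity)]
    gcongr
    nlinarith [mul_pos (inv_pos.2 ht) hs]
  · refine (ae_restrict_iff' measurableSet_Ioi).2 (ae_of_all _ fun s hs => ?_)
    have hs : 0 < s := hs
    have hlim : Tendsto (fun t => a + t⁻¹ * s) atTop (𝓝 (a + 0 * s)) :=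
      (tendsto_inv_atTop_zero.mul_const s).const_add a
    rw [zero_mul, add_zero] at hlim
    exact tendsto_const_nhds.div ((hlim.const_mul s).sqrt) (sqrt_pos.2 (by positivity)).ne'

theorem integral_exp_neg_mul_div_two_sqrt_sq_add_sq {m t : ℝ} (hm : 0 ≤ m) (ht : 0 < t) :
    ∫ p, exp (-t * √(m ^ 2 + p ^ 2)) / (2 * √(m ^ 2 + p ^ 2))
      = t ^ (-(1 / 2) : ℝ) * exp (-m * t) *
          ∫ s in Ioi 0, exp (-s) / √(s * (2 * m + t⁻¹ * s)) := by
  rw [integral_div_two_sqrt_sq_add_sq (fun v => exp (-t * v)) hm,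
    integral_Ioi_eq_inv_mul_integral_Ioi_comp_add_mul _ m ht, ← integral_const_mul,
    ← integral_const_mul]
  refine setIntegral_congr_fun measurableSet_Ioi fun s hs => ?_
  have hs : 0 < s := hs
  have hsq : (m + t⁻¹ * s) ^ 2 - m ^ 2 = t⁻¹ * (s * (2 * m + t⁻¹ * s)) := by ring
  have hexp : exp (-t * (m + t⁻¹ * s)) = exp (-m * t) * exp (-s) := by
    rw [← exp_add]; congr 1; field_simp; ring
  have hrpow : t ^ (-(1 / 2) : ℝ) = √t⁻¹ := by rw [rpow_neg ht.le, sqrt_inv, sqrt_eq_rpow]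
  have hinv : t⁻¹ = √t⁻¹ * √t⁻¹ := (mul_self_sqrt (inv_nonneg.2 ht.le)).symm
  rw [hsq, hexp, hrpow, sqrt_mul (inv_nonneg.2 ht.le)]
  nth_rewrite 1 [hinv]
  have : 0 < √t⁻¹ := sqrt_pos.2 (inv_pos.2 ht)
  field_simp

/-- Ornstein–Zernike asymptotic for the single-mass contribution:
`(∫_{-∞}^∞ e^{-t√(m²+p²)}/(2√(m²+p²)) dp) / (t^{-1/2} e^{-mt}) → √(π/(2m))` as `t → ∞`. -/
theorem stmt5 (m : ℝ) (hm : 0 < m) :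
    Tendsto (fun t : ℝ =>
        (∫ p : ℝ, exp (-t * sqrt (m ^ 2 + p ^ 2)) / (2 * sqrt (m ^ 2 + p ^ 2))) /
          (t ^ (-(1/2) : ℝ) * exp (-m * t)))
      atTop (nhds (sqrt (π / (2 * m)))) := by
  refine (tendsto_integral_exp_neg_div_sqrt_mul_add (by positivity : 0 < 2 * m)).congr' ?_
  filter_upwards [eventually_gt_atTop 0] with t ht
  rw [integral_exp_neg_mul_div_two_sqrt_sq_add_sq hm.le ht,
    mul_div_cancel_left₀ _ (by positivity)]
end

section
/- Let m₁ > 0 and ε > 0, and let ρ̃ be a Borel measure on the real line supported in [m₁+ε, ∞) with ∫ (1/m) dρ̃(m) < ∞. Then the limit as t → ∞ of t^{1/2} e^{m₁ t} · ∫ ( ∫_{-∞}^{∞} e^{-t√(m²+p²)} / (2√(m²+p²)) dp ) dρ̃(m) exists and equals 0. -/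
/-!
For `m ≥ m₁ + ε` and `t ≥ 1`, writing `ω = √(m² + p²) ≥ max m |p|`, we have
`e^{-tω} / (2ω) ≤ e^{-(t-1)(m₁+ε)} e^{-|p|} / (2m)`, so the inner integral is at most
`e^{-(t-1)(m₁+ε)} / m`. Integrating against `ρ̃` and using `∫ (1/m) dρ̃ < ∞`, the whole expression
is `O(t^{1/2} e^{-εt})`, which tends to `0`.
-/

open MeasureTheory Filter Real Set

lemma integral_exp_neg_abs : ∫ x : ℝ, exp (-|x|) = 2 := by
  rw [integral_comp_abs (f := fun x => exp (-x)), integral_exp_neg_Ioi_zero, mul_one]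

lemma integrable_exp_neg_abs : Integrable (fun x : ℝ => exp (-|x|)) :=
  .of_integral_ne_zero (by rw [integral_exp_neg_abs]; norm_num)

/-- `K₀(m t)`, in the time-momentum representation of the free Euclidean propagator. -/
noncomputable def freePropagator (t m : ℝ) : ℝ :=
  ∫ p : ℝ, exp (-t * √(m ^ 2 + p ^ 2)) / (2 * √(m ^ 2 + p ^ 2))

lemma freePropagator_nonneg (t m : ℝ) : 0 ≤ freePropagator t m :=
  integral_nonneg fun _ => by positivity

section Bounds

variable {a m t : ℝ}

lemma exp_neg_mul_sqrt_div_le (ha : 0 < a) (ham : a ≤ m) (ht : 1 ≤ t) (p : ℝ) :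
    exp (-t * √(m ^ 2 + p ^ 2)) / (2 * √(m ^ 2 + p ^ 2))
      ≤ exp (-(t - 1) * a) / (2 * m) * exp (-|p|) := by
  set ω := √(m ^ 2 + p ^ 2)
  have hmω : m ≤ ω := le_sqrt_of_sq_le (by nlinarith)
  have hpω : |p| ≤ ω := by rw [← sqrt_sq_eq_abs]; exact sqrt_le_sqrt (by nlinarith)
  -- `t ω = (t - 1) ω + ω` with `ω ≥ a` in the first term and `ω ≥ |p|` in the second
  have hexp : exp (-t * ω) ≤ exp (-(t - 1) * a) * exp (-|p|) := by
    rw [← exp_add, exp_le_exp]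
    nlinarith [mul_le_mul_of_nonneg_left (ham.trans hmω) (sub_nonneg.2 ht)]
  calc exp (-t * ω) / (2 * ω) ≤ exp (-(t - 1) * a) * exp (-|p|) / (2 * m) :=
        div_le_div₀ (by positivity) hexp (by linarith) (by linarith)
    _ = exp (-(t - 1) * a) / (2 * m) * exp (-|p|) := by ring

lemma freePropagator_le (ha : 0 < a) (ham : a ≤ m) (ht : 1 ≤ t) :
    freePropagator t m ≤ exp (-(t - 1) * a) * (1 / m) := by
  have hm : 0 < m := ha.trans_le ham
  calc freePropagator t m ≤ ∫ p : ℝ, exp (-(t - 1) * a) / (2 * m) * exp (-|p|) :=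
        integral_mono_of_nonneg (.of_forall fun _ => by positivity)
          (integrable_exp_neg_abs.const_mul _) (.of_forall (exp_neg_mul_sqrt_div_le ha ham ht))
    _ = exp (-(t - 1) * a) * (1 / m) := by
        rw [integral_const_mul, integral_exp_neg_abs]; field_simp

lemma integral_freePropagator_le {ρ : Measure ℝ} (ha : 0 < a) (hρ : ∀ᵐ m ∂ρ, a ≤ m)
    (hint : Integrable (fun m : ℝ => 1 / m) ρ) (ht : 1 ≤ t) :
    ∫ m, freePropagator t m ∂ρ ≤ exp (-(t - 1) * a) * ∫ m, 1 / m ∂ρ := by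
  rw [← integral_const_mul]
  exact integral_mono_of_nonneg (.of_forall fun m => freePropagator_nonneg t m)
    (hint.const_mul _) (hρ.mono fun m ham => freePropagator_le ha ham ht)

end Bounds

/-- Tail estimate: if `ρ̃` is supported in `[m₁+ε, ∞)` with `∫ (1/m) dρ̃(m) < ∞`, then
`t^{1/2} e^{m₁ t} ∫ (∫ e^{-t√(m²+p²)}/(2√(m²+p²)) dp) dρ̃(m) → 0` as `t → ∞`. -/
theorem stmt7 (m₁ ε : ℝ) (hm : 0 < m₁) (hε : 0 < ε) (ρ : Measure ℝ)
    (hsupp : ρ (Iio (m₁ + ε)) = 0)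
    (hfin : ∫⁻ m, ENNReal.ofReal (1 / m) ∂ρ < ⊤) :
    Tendsto (fun t : ℝ =>
        t ^ ((1:ℝ)/2) * exp (m₁ * t) *
          ∫ m, (∫ p : ℝ, exp (-t * sqrt (m ^ 2 + p ^ 2)) / (2 * sqrt (m ^ 2 + p ^ 2))) ∂ρ)
      atTop (nhds 0) := by
  change Tendsto (fun t : ℝ => t ^ ((1:ℝ)/2) * exp (m₁ * t) * ∫ m, freePropagator t m ∂ρ)
    atTop (nhds 0)
  have ha : 0 < m₁ + ε := add_pos hm hε
  have hae : ∀ᵐ m ∂ρ, m₁ + ε ≤ m := by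
    filter_upwards [measure_eq_zero_iff_ae_notMem.1 hsupp] with m hmem using not_lt.1 hmem
  have hint : Integrable (fun m : ℝ => 1 / m) ρ :=
    (lintegral_ofReal_ne_top_iff_integrable (by fun_prop)
      (hae.mono fun m ham => one_div_nonneg.2 (ha.le.trans ham))).1 hfin.ne
  set K := ∫ m, 1 / m ∂ρ
  have hdecay : Tendsto (fun t : ℝ => exp (m₁ + ε) * K * (t ^ ((1:ℝ)/2) * exp (-ε * t)))
      atTop (nhds 0) := by
    simpa using (tendsto_rpow_mul_exp_neg_mul_atTop_nhds_zero _ ε hε).const_mul (exp (m₁ + ε) * K)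
  refine squeeze_zero' ?_ ?_ hdecay
  · filter_upwards [eventually_ge_atTop 0] with t ht
    exact mul_nonneg (by positivity) (integral_nonneg fun m => freePropagator_nonneg t m)
  · filter_upwards [eventually_ge_atTop 1] with t ht
    have hexp : exp (m₁ * t) * exp (-(t - 1) * (m₁ + ε)) = exp (m₁ + ε) * exp (-ε * t) := by
      rw [← exp_add, ← exp_add]; ring_nf
    calc t ^ ((1:ℝ)/2) * exp (m₁ * t) * ∫ m, freePropagator t m ∂ρ
        ≤ t ^ ((1:ℝ)/2) * exp (m₁ * t) * (exp (-(t - 1) * (m₁ + ε)) * K) := by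
          gcongr; exact integral_freePropagator_le ha hae hint ht
      _ = exp (m₁ + ε) * K * (t ^ ((1:ℝ)/2) * exp (-ε * t)) := by
          linear_combination (t ^ ((1:ℝ)/2) * K) * hexp
end

section
/- Let m > 0, C₃ > 0, and let Ĥ : (0, ∞) → [0, ∞) be a measurable function such that Ĥ(r)/(r^{-1/2} e^{-mr}) → C₃ as r → ∞. Define K(t) = ∫_{-∞}^{∞} Ĥ(√(t²+y²)) dy (a Lebesgue integral with values in [0, ∞], which is finite for all sufficiently large t). Then the limit as t → ∞ of K(t)/e^{-mt} exists and equals C₃ · √(2π/m). -/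
/-!
Write `φ(r) = r^{-1/2} e^{-mr}` and `I(t) = ∫ φ(√(t² + y²)) dy`. Since `Ĥ = C₃ φ + o(φ)` and
`√(t² + y²) ≥ t`, for large `t` the integrand of `K(t)` is squeezed between
`(C₃ ± ε) φ(√(t² + y²))`, so monotonicity of the Lebesgue integral gives
`K(t) = C₃ I(t) + o(I(t))`. The substitution `y = √t u` turns `e^{mt} I(t)` into the integral
of a profile that converges pointwise to `exp(-m u²/2)` and is dominated by `e^{2m} e^{-m|u|}`,
so `e^{mt} I(t) → √(2π/m)` by dominated convergence.
-/

open MeasureTheory Filter Real Set Asymptotics Topology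

theorem Asymptotics.isLittleO_sub_const_mul_of_tendsto_div {α : Type*} {l : Filter α}
    {f g : α → ℝ} {c : ℝ} (hg : ∀ᶠ x in l, g x ≠ 0) (h : Tendsto (fun x => f x / g x) l (𝓝 c)) :
    (fun x => f x - c * g x) =o[l] g := by
  refine (isLittleO_iff_tendsto' (hg.mono fun x hx h => absurd h hx)).2 ?_
  refine (tendsto_sub_nhds_zero_iff.2 h).congr' (hg.mono fun x hx => ?_)
  field_simp

theorem Asymptotics.IsLittleO.tendsto_div_of_sub_const_mul {α : Type*} {l : Filter α}
    {a b e : α → ℝ} {c L : ℝ} (h : (fun x => a x - c * b x) =o[l] b)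
    (hb : Tendsto (fun x => b x / e x) l (𝓝 L)) :
    Tendsto (fun x => a x / e x) l (𝓝 (c * L)) := by
  have hsmall : Tendsto (fun x => (a x - c * b x) / e x) l (𝓝 0) := by
    simp only [div_eq_mul_inv] at hb ⊢
    exact (isLittleO_one_iff ℝ).1 ((h.mul_isBigO (isBigO_refl (fun x => (e x)⁻¹) l)).trans_isBigO
      (hb.isBigO_one ℝ))
  simpa using (hb.const_mul c).add hsmall |>.congr fun x => by ring

theorem toReal_lintegral_ofReal_sub_le {α : Type*} [MeasurableSpace α] {μ : Measure α}
    {f g : α → ℝ} {c ε : ℝ} (hc : 0 ≤ c) (hε : 0 ≤ ε) (hg : Integrable g μ) (hg0 : 0 ≤ g)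
    (hfg : ∀ x, |f x - c * g x| ≤ ε * g x) :
    ∫⁻ x, ENNReal.ofReal (f x) ∂μ ≠ ⊤ ∧
      |(∫⁻ x, ENNReal.ofReal (f x) ∂μ).toReal - c * ∫ x, g x ∂μ| ≤ ε * ∫ x, g x ∂μ := by
  have hI : 0 ≤ ∫ x, g x ∂μ := integral_nonneg hg0
  have lintegral_ofReal_const_mul {a : ℝ} (ha : 0 ≤ a) :
      ∫⁻ x, ENNReal.ofReal (a * g x) ∂μ = ENNReal.ofReal (a * ∫ x, g x ∂μ) := by
    rw [← integral_const_mul, ofReal_integral_eq_lintegral_ofReal (hg.const_mul a)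
      (ae_of_all _ fun x => mul_nonneg ha (hg0 x))]
  have hupper : ∫⁻ x, ENNReal.ofReal (f x) ∂μ ≤ ENNReal.ofReal ((c + ε) * ∫ x, g x ∂μ) := by
    rw [← lintegral_ofReal_const_mul (by positivity)]
    exact lintegral_mono fun x => ENNReal.ofReal_le_ofReal (by linarith [(abs_le.1 (hfg x)).2])
  have hfin := ne_top_of_le_ne_top ENNReal.ofReal_ne_top hupper
  refine ⟨hfin, abs_sub_le_iff.2 ⟨?_, ?_⟩⟩
  · have := ENNReal.toReal_mono ENNReal.ofReal_ne_top hupper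
    rw [ENNReal.toReal_ofReal (by positivity)] at this
    linarith
  · rcases le_or_gt (c - ε) 0 with hcε | hcε
    · nlinarith [ENNReal.toReal_nonneg (a := ∫⁻ x, ENNReal.ofReal (f x) ∂μ)]
    · have hlower : ENNReal.ofReal ((c - ε) * ∫ x, g x ∂μ) ≤ ∫⁻ x, ENNReal.ofReal (f x) ∂μ := by
        rw [← lintegral_ofReal_const_mul hcε.le]
        exact lintegral_mono fun x => ENNReal.ofReal_le_ofReal (by linarith [(abs_le.1 (hfg x)).1])
      have := ENNReal.toReal_mono hfin hlower
      rw [ENNReal.toReal_ofReal (by positivity)] at this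
      linarith

theorem isLittleO_toReal_lintegral_ofReal_comp {α : Type*} [MeasurableSpace α] {μ : Measure α}
    {H φ : ℝ → ℝ} {C : ℝ} {ρ : ℝ → α → ℝ} (hC : 0 ≤ C) (hφ : 0 ≤ φ)
    (hH : (fun r => H r - C * φ r) =o[atTop] φ) (hρ : ∀ t x, t ≤ ρ t x)
    (hint : ∀ᶠ t in atTop, Integrable (fun x => φ (ρ t x)) μ) :
    (∀ᶠ t in atTop, ∫⁻ x, ENNReal.ofReal (H (ρ t x)) ∂μ ≠ ⊤) ∧
      (fun t => (∫⁻ x, ENNReal.ofReal (H (ρ t x)) ∂μ).toReal - C * ∫ x, φ (ρ t x) ∂μ)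
        =o[atTop] fun t => ∫ x, φ (ρ t x) ∂μ := by
  have hsandwich {ε : ℝ} (hε : 0 < ε) : ∀ᶠ t in atTop,
      ∫⁻ x, ENNReal.ofReal (H (ρ t x)) ∂μ ≠ ⊤ ∧
      |(∫⁻ x, ENNReal.ofReal (H (ρ t x)) ∂μ).toReal - C * ∫ x, φ (ρ t x) ∂μ| ≤
        ε * ∫ x, φ (ρ t x) ∂μ := by
    obtain ⟨R, hR⟩ := eventually_atTop.1 (hH.bound hε)
    filter_upwards [hint, eventually_ge_atTop R] with t ht htR
    refine toReal_lintegral_ofReal_sub_le hC hε.le ht (fun x => hφ _) fun x => ?_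
    simpa [Real.norm_eq_abs, abs_of_nonneg (hφ _)] using hR _ (htR.trans (hρ t x))
  refine ⟨(hsandwich one_pos).mono fun t h => h.1, isLittleO_iff.2 fun ε hε => ?_⟩
  filter_upwards [hsandwich hε] with t ht
  rw [Real.norm_eq_abs, Real.norm_eq_abs, abs_of_nonneg (integral_nonneg fun x => hφ (ρ t x))]
  exact ht.2

theorem integrable_exp_neg_mul_abs {m : ℝ} (hm : 0 < m) :
    Integrable (fun x : ℝ => exp (-m * |x|)) := by
  have hloc : LocallyIntegrable (fun x : ℝ => exp (-m * |x|)) :=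
    (by fun_prop : Continuous _).locallyIntegrable
  refine hloc.integrable_of_isBigO_atTop_of_norm_isNegInvariant (g := fun x => exp (-m * x))
    (ae_of_all _ fun x => by simp) ?_ ⟨Ioi 0, Ioi_mem_atTop 0, exp_neg_integrableOn_Ioi 0 hm⟩
  exact EventuallyEq.isBigO ((eventually_ge_atTop 0).mono fun x hx => by simp [abs_of_nonneg hx])

-- The square-root form agrees with `r ^ (-(1/2)) * exp (-m * r)` for `r ≥ 0` and stays
-- nonnegative for `r < 0`.
noncomputable def ozProfile (m r : ℝ) : ℝ := (√r)⁻¹ * exp (-m * r)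

-- `√t e^{mt} φ(√(t² + t u²))`, the integrand of `e^{mt} I(t)` after `y = √t u`,
-- see `sqrt_mul_ozProfile`.
noncomputable def rescaledOzProfile (m t u : ℝ) : ℝ :=
  (√(√(1 + u ^ 2 / t)))⁻¹ * exp (-m * (u ^ 2 / (√(1 + u ^ 2 / t) + 1)))

theorem ozProfile_nonneg (m : ℝ) : 0 ≤ ozProfile m := fun r => by
  unfold ozProfile; positivity

theorem ozProfile_pos (m : ℝ) {r : ℝ} (hr : 0 < r) : 0 < ozProfile m r := by
  unfold ozProfile; positivity

theorem ozProfile_eq_rpow (m : ℝ) {r : ℝ} (hr : 0 ≤ r) :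
    ozProfile m r = r ^ (-(1 / 2) : ℝ) * exp (-m * r) := by
  rw [ozProfile, rpow_neg hr, sqrt_eq_rpow]

theorem sqrt_mul_ozProfile (m : ℝ) {t : ℝ} (ht : 0 < t) (u : ℝ) :
    √t * ozProfile m √(t ^ 2 + (√t * u) ^ 2) = exp (-m * t) * rescaledOzProfile m t u := by
  rw [rescaledOzProfile]
  set s := √(1 + u ^ 2 / t)
  have hs : 0 ≤ s := sqrt_nonneg _
  have hs2 : t * s ^ 2 = t + u ^ 2 := by
    rw [sq_sqrt (by positivity)]
    field_simp
  have hradius : √(t ^ 2 + (√t * u) ^ 2) = t * s := by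
    rw [← sqrt_sq (by positivity : 0 ≤ t * s), mul_pow, mul_pow, sq_sqrt ht.le]
    congr 1
    linear_combination (-t) * hs2
  -- `t s - t = u² / (s + 1)` because `t (s² - 1) = u²`
  have hexcess : t * s = t + u ^ 2 / (s + 1) := by
    field_simp
    linear_combination hs2
  clear_value s
  rw [hradius, ozProfile, sqrt_mul ht.le, hexcess, mul_add, exp_add]
  field_simp

theorem rescaledOzProfile_le {m t : ℝ} (hm : 0 < m) (ht : 1 ≤ t) (u : ℝ) :
    rescaledOzProfile m t u ≤ exp (2 * m) * exp (-m * |u|) := by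
  set s := √(1 + u ^ 2 / t)
  have hs : 1 ≤ s := one_le_sqrt.2 (by simp only [le_add_iff_nonneg_right]; positivity)
  have hs_le : s ≤ 1 + |u| := by
    refine sqrt_le_iff.2 ⟨by positivity, ?_⟩
    have : u ^ 2 / t ≤ u ^ 2 := div_le_self (sq_nonneg u) ht
    nlinarith [sq_abs u, abs_nonneg u]
  -- `u² / (s + 1) ≥ u² / (|u| + 2) ≥ |u| - 2`
  have hdecay : |u| - 2 ≤ u ^ 2 / (s + 1) := by
    rw [le_div_iff₀ (by positivity)]
    nlinarith [sq_abs u, abs_nonneg u]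
  calc rescaledOzProfile m t u ≤ 1 * exp (-m * (u ^ 2 / (s + 1))) := by
        refine mul_le_mul_of_nonneg_right (inv_le_one_of_one_le₀ (one_le_sqrt.2 hs)) (exp_nonneg _)
    _ ≤ exp (2 * m) * exp (-m * |u|) := by
        rw [one_mul, ← exp_add, exp_le_exp]
        nlinarith

theorem integrable_rescaledOzProfile {m t : ℝ} (hm : 0 < m) (ht : 1 ≤ t) :
    Integrable (rescaledOzProfile m t) := by
  refine ((integrable_exp_neg_mul_abs hm).const_mul (exp (2 * m))).mono'
    (by unfold rescaledOzProfile; fun_prop) (ae_of_all _ fun u => ?_)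
  rw [Real.norm_of_nonneg (by unfold rescaledOzProfile; positivity)]
  exact rescaledOzProfile_le hm ht u

theorem tendsto_rescaledOzProfile (m u : ℝ) :
    Tendsto (fun t => rescaledOzProfile m t u) atTop (𝓝 (exp (-(m / 2) * u ^ 2))) := by
  have hs : Tendsto (fun t => √(1 + u ^ 2 / t)) atTop (𝓝 1) := by
    simpa using ((tendsto_const_nhds.div_atTop tendsto_id).const_add 1).sqrt
  have hlim := (hs.sqrt.inv₀ (by simp)).mul
    (((tendsto_const_nhds (x := u ^ 2)).div (hs.add_const 1) (by norm_num)).const_mul (-m)).rexp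
  convert hlim using 1
  · rfl
  · norm_num
    ring_nf

theorem integral_ozProfile_sqrt_sq_add_sq {m t : ℝ} (ht : 0 < t) :
    ∫ y, ozProfile m √(t ^ 2 + y ^ 2) = exp (-m * t) * ∫ u, rescaledOzProfile m t u := by
  have hcov := Measure.integral_comp_mul_left (fun y => ozProfile m √(t ^ 2 + y ^ 2)) √t
  rw [abs_of_nonneg (by positivity), smul_eq_mul, eq_inv_mul_iff_mul_eq₀ (by positivity)] at hcov
  rw [← hcov, ← integral_const_mul, ← integral_const_mul]
  exact integral_congr_ae (ae_of_all _ (sqrt_mul_ozProfile m ht))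

theorem integrable_ozProfile_sqrt_sq_add_sq {m t : ℝ} (hm : 0 < m) (ht : 1 ≤ t) :
    Integrable (fun y => ozProfile m √(t ^ 2 + y ^ 2)) := by
  have ht0 : 0 < t := one_pos.trans_le ht
  rw [← integrable_comp_mul_left_iff _ (sqrt_pos.2 ht0).ne']
  refine ((integrable_rescaledOzProfile hm ht).const_mul (exp (-m * t) / √t)).congr
    (ae_of_all _ fun u => ?_)
  dsimp only
  rw [div_mul_eq_mul_div, div_eq_iff (by positivity), ← sqrt_mul_ozProfile m ht0, mul_comm]

theorem tendsto_integral_ozProfile_div_exp {m : ℝ} (hm : 0 < m) :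
    Tendsto (fun t => (∫ y, ozProfile m √(t ^ 2 + y ^ 2)) / exp (-m * t)) atTop
      (𝓝 √(2 * π / m)) := by
  have hrescaled : Tendsto (fun t => ∫ u, rescaledOzProfile m t u) atTop
      (𝓝 (∫ u, exp (-(m / 2) * u ^ 2))) := by
    refine tendsto_integral_filter_of_dominated_convergence (fun u => exp (2 * m) * exp (-m * |u|))
      (Eventually.of_forall fun t => by unfold rescaledOzProfile; fun_prop) ?_
      ((integrable_exp_neg_mul_abs hm).const_mul _)
      (ae_of_all _ fun u => tendsto_rescaledOzProfile m u)
    filter_upwards [eventually_ge_atTop 1] with t ht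
    refine ae_of_all _ fun u => ?_
    rw [Real.norm_of_nonneg (by unfold rescaledOzProfile; positivity)]
    exact rescaledOzProfile_le hm ht u
  rw [integral_gaussian, div_div_eq_mul_div, mul_comm π] at hrescaled
  refine hrescaled.congr' ((eventually_gt_atTop 0).mono fun t ht => ?_)
  dsimp only
  rw [integral_ozProfile_sqrt_sq_add_sq ht, mul_div_cancel_left₀ _ (exp_pos _).ne']

theorem stmt8_general (m C₃ : ℝ) (hm : 0 < m) (hC : 0 < C₃) (H : ℝ → ℝ)
    (hasymp : Tendsto (fun r : ℝ => H r / (r ^ (-(1/2) : ℝ) * exp (-m * r)))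
      atTop (nhds C₃)) :
    (∀ᶠ t : ℝ in atTop,
        (∫⁻ y : ℝ, ENNReal.ofReal (H (sqrt (t ^ 2 + y ^ 2)))) ≠ ⊤) ∧
    Tendsto (fun t : ℝ =>
        (∫⁻ y : ℝ, ENNReal.ofReal (H (sqrt (t ^ 2 + y ^ 2)))).toReal / exp (-m * t))
      atTop (nhds (C₃ * sqrt (2 * π / m))) := by
  have hH : (fun r => H r - C₃ * ozProfile m r) =o[atTop] ozProfile m := by
    refine isLittleO_sub_const_mul_of_tendsto_div
      ((eventually_gt_atTop 0).mono fun r hr => (ozProfile_pos m hr).ne') ?_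
    refine hasymp.congr' ((eventually_ge_atTop 0).mono fun r hr => ?_)
    dsimp only
    rw [ozProfile_eq_rpow m hr]
  obtain ⟨hfinite, hK⟩ := isLittleO_toReal_lintegral_ofReal_comp (μ := volume) hC.le
    (ozProfile_nonneg m) hH (fun t y => (le_abs_self t).trans (abs_le_sqrt (by nlinarith)))
    ((eventually_ge_atTop 1).mono fun t ht => integrable_ozProfile_sqrt_sq_add_sq hm ht)
  exact ⟨hfinite, hK.tendsto_div_of_sub_const_mul (tendsto_integral_ozProfile_div_exp hm)⟩

/-- Proposition (large-time behavior of `K`): if `Ĥ : (0,∞) → [0,∞)` is measurable with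
`Ĥ(r)/(r^{-1/2} e^{-mr}) → C₃`, then `K(t) = ∫_{-∞}^∞ Ĥ(√(t²+y²)) dy` (a `[0,∞]`-valued
Lebesgue integral) is finite for all sufficiently large `t`, and
`K(t)/e^{-mt} → C₃ √(2π/m)` as `t → ∞`. -/
theorem stmt8 (m C₃ : ℝ) (hm : 0 < m) (hC : 0 < C₃) (H : ℝ → ℝ)
    (hmeas : Measurable H) (hnonneg : ∀ r : ℝ, 0 < r → 0 ≤ H r)
    (hasymp : Tendsto (fun r : ℝ => H r / (r ^ (-(1/2) : ℝ) * exp (-m * r)))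
      atTop (nhds C₃)) :
    (∀ᶠ t : ℝ in atTop,
        (∫⁻ y : ℝ, ENNReal.ofReal (H (sqrt (t ^ 2 + y ^ 2)))) ≠ ⊤) ∧
    Tendsto (fun t : ℝ =>
        (∫⁻ y : ℝ, ENNReal.ofReal (H (sqrt (t ^ 2 + y ^ 2)))).toReal / exp (-m * t))
      atTop (nhds (C₃ * sqrt (2 * π / m))) :=
  stmt8_general m C₃ hm hC H hasymp
end

section
/- Let m > 0, 0 < β < 1/2, and t ≥ 1. Then ∫_0^{t^β} (u² + t²)^{-1/4} e^{-m√(u²+t²)} du ≤ t^{β − 1/2} e^{m} e^{-mt}. -/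
/-!
Since `u² + t² ≥ t²`, the integrand is at most `t^{-1/2} e^{-mt}` on the whole range, and the
range has length `t^β`; the factor `e^m ≥ 1` is then slack.
-/

open MeasureTheory Real Set

theorem rpow_sq_add_sq_le {p : ℝ} (hp : p ≤ 0) (u : ℝ) {t : ℝ} (ht : 0 < t) :
    (u ^ 2 + t ^ 2) ^ p ≤ t ^ (2 * p) := by
  rw [rpow_mul ht.le, rpow_two]
  exact rpow_le_rpow_of_nonpos (by positivity) (le_add_of_nonneg_left (sq_nonneg u)) hp

theorem exp_neg_mul_sqrt_sq_add_sq_le {m : ℝ} (hm : 0 ≤ m) (u t : ℝ) :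
    exp (-m * √(u ^ 2 + t ^ 2)) ≤ exp (-m * t) := by
  have ht : t ≤ √(u ^ 2 + t ^ 2) := le_sqrt_of_sq_le (le_add_of_nonneg_left (sq_nonneg u))
  exact exp_le_exp.2 (mul_le_mul_of_nonpos_left ht (neg_nonpos.2 hm))

theorem norm_rpow_sq_add_sq_mul_exp_le {m : ℝ} (hm : 0 ≤ m) (u : ℝ) {t : ℝ} (ht : 0 < t) :
    ‖(u ^ 2 + t ^ 2) ^ (-(1/4) : ℝ) * exp (-m * √(u ^ 2 + t ^ 2))‖
      ≤ t ^ (-(1/2) : ℝ) * exp (-m * t) := by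
  rw [Real.norm_of_nonneg (by positivity)]
  have hpow := rpow_sq_add_sq_le (by norm_num : (-(1/4) : ℝ) ≤ 0) u ht
  rw [show 2 * (-(1/4) : ℝ) = -(1/2) by norm_num] at hpow
  exact mul_le_mul hpow (exp_neg_mul_sqrt_sq_add_sq_le hm u t) (exp_pos _).le (by positivity)

theorem stmt10_general (m β t : ℝ) (hm : 0 < m) (ht : 1 ≤ t) :
    (∫ u in Ioo (0:ℝ) (t ^ β), (u ^ 2 + t ^ 2) ^ (-(1/4) : ℝ) * exp (-m * sqrt (u ^ 2 + t ^ 2)))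
      ≤ t ^ (β - 1/2) * exp m * exp (-m * t) := by
  have ht0 : 0 < t := one_pos.trans_le ht
  calc _ ≤ ‖∫ u in Ioo (0:ℝ) (t ^ β),
          (u ^ 2 + t ^ 2) ^ (-(1/4) : ℝ) * exp (-m * sqrt (u ^ 2 + t ^ 2))‖ := le_norm_self _
    _ ≤ t ^ (-(1/2) : ℝ) * exp (-m * t) * volume.real (Ioo (0:ℝ) (t ^ β)) :=
        norm_setIntegral_le_of_norm_le_const measure_Ioo_lt_top
          fun u _ ↦ norm_rpow_sq_add_sq_mul_exp_le hm.le u ht0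
    _ = t ^ (β - 1/2) * exp (-m * t) := by
        rw [volume_real_Ioo_of_le (rpow_pos_of_pos ht0 β).le, sub_zero, sub_eq_add_neg,
          rpow_add ht0]
        ring
    _ ≤ t ^ (β - 1/2) * exp m * exp (-m * t) := by
        rw [mul_right_comm]
        exact le_mul_of_one_le_right (by positivity) (one_le_exp hm.le)

/-- For `m > 0`, `0 < β < 1/2` and `t ≥ 1`:
`∫_0^{t^β} (u² + t²)^{-1/4} e^{-m√(u²+t²)} du ≤ t^{β−1/2} e^{m} e^{-mt}`. -/
theorem stmt10 (m β t : ℝ) (hm : 0 < m) (hβ : 0 < β) (hβhalf : β < 1/2) (ht : 1 ≤ t) :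
    (∫ u in Ioo (0:ℝ) (t ^ β), (u ^ 2 + t ^ 2) ^ (-(1/4) : ℝ) * exp (-m * sqrt (u ^ 2 + t ^ 2)))
      ≤ t ^ (β - 1/2) * exp m * exp (-m * t) :=
  stmt10_general m β t hm ht
end

section
/- Let m > 0, α > 1/2, and t ≥ 1. Then ∫_{t^α}^{∞} (u² + t²)^{-1/4} e^{-m√(u²+t²)} du ≤ (e^{m}/m) e^{-m t^{α − 1/2}} e^{-mt}. -/
/-!
For `t ≥ 1` and `u ≥ 0` one has `√(u² + t²) ≥ u / √t + (t - 1)` and `(u² + t²)^{-1/4} ≤ t^{-1/2}`,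
so the integrand is dominated by `t^{-1/2} e^{m} e^{-mt} e^{-(m/√t) u}`. Integrating this exponential
over `(c, ∞)` gives `(e^m / m) e^{-m c/√t} e^{-mt}`, and `t^α / √t = t^{α - 1/2}`.
-/

open MeasureTheory Real Set

lemma div_sqrt_add_sub_one_le_sqrt_sq_add_sq {t u : ℝ} (ht : 1 ≤ t) (hu : 0 ≤ u) :
    u / √t + (t - 1) ≤ √(u ^ 2 + t ^ 2) := by
  have hst : 0 < √t := sqrt_pos.2 (by linarith)
  obtain ⟨v, hv, rfl⟩ : ∃ v, 0 ≤ v ∧ u = v * √t := ⟨u / √t, by positivity, by field_simp⟩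
  rw [mul_div_cancel_right₀ _ hst.ne', le_sqrt (by linarith) (by positivity), mul_pow,
    sq_sqrt (by linarith)]
  -- `(v√t)² + t² - (v + t - 1)² = (t - 1)(v - 1)² + v² + t`
  nlinarith [mul_nonneg (sub_nonneg.2 ht) (sq_nonneg (v - 1))]

lemma rpow_neg_quarter_sq_add_sq_le {t : ℝ} (ht : 0 < t) (u : ℝ) :
    (u ^ 2 + t ^ 2) ^ (-(1/4) : ℝ) ≤ (√t)⁻¹ := by
  calc (u ^ 2 + t ^ 2) ^ (-(1/4) : ℝ) ≤ (t ^ 2) ^ (-(1/4) : ℝ) :=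
        rpow_le_rpow_of_nonpos (by positivity) (by nlinarith) (by norm_num)
    _ = (√t)⁻¹ := by
        rw [← rpow_natCast, ← rpow_mul ht.le, sqrt_eq_rpow, ← rpow_neg ht.le]
        norm_num

lemma integrand_le_exp_decay {m t u : ℝ} (hm : 0 ≤ m) (ht : 1 ≤ t) (hu : 0 ≤ u) :
    (u ^ 2 + t ^ 2) ^ (-(1/4) : ℝ) * exp (-m * √(u ^ 2 + t ^ 2))
      ≤ (√t)⁻¹ * exp m * exp (-m * t) * exp (-(m / √t) * u) := by
  have hexp : exp (-m * √(u ^ 2 + t ^ 2)) ≤ exp m * exp (-m * t) * exp (-(m / √t) * u) := by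
    rw [← exp_add, ← exp_add, exp_le_exp]
    have := mul_le_mul_of_nonneg_left (div_sqrt_add_sub_one_le_sqrt_sq_add_sq ht hu) hm
    have hlin : m / √t * u = m * (u / √t) := by ring
    linarith
  calc (u ^ 2 + t ^ 2) ^ (-(1/4) : ℝ) * exp (-m * √(u ^ 2 + t ^ 2))
      ≤ (√t)⁻¹ * (exp m * exp (-m * t) * exp (-(m / √t) * u)) :=
        mul_le_mul (rpow_neg_quarter_sq_add_sq_le (by linarith) u) hexp (exp_pos _).le
          (by positivity)
    _ = _ := by ring

lemma integral_Ioi_le_of_nonneg {m t c : ℝ} (hm : 0 < m) (ht : 1 ≤ t) (hc : 0 ≤ c) :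
    ∫ u in Ioi c, (u ^ 2 + t ^ 2) ^ (-(1/4) : ℝ) * exp (-m * √(u ^ 2 + t ^ 2))
      ≤ exp m / m * exp (-m * (c / √t)) * exp (-m * t) := by
  have hst : 0 < √t := sqrt_pos.2 (by linarith)
  have hb : -(m / √t) < 0 := neg_lt_zero.2 (by positivity)
  calc ∫ u in Ioi c, (u ^ 2 + t ^ 2) ^ (-(1/4) : ℝ) * exp (-m * √(u ^ 2 + t ^ 2))
      ≤ ∫ u in Ioi c, (√t)⁻¹ * exp m * exp (-m * t) * exp (-(m / √t) * u) := by
        refine integral_mono_of_nonneg (ae_of_all _ fun u ↦ by positivity)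
          ((integrableOn_exp_mul_Ioi hb c).const_mul _) ?_
        filter_upwards [ae_restrict_mem measurableSet_Ioi] with u hu
        exact integrand_le_exp_decay hm.le ht (hc.trans hu.le)
    _ = exp m / m * exp (-m * (c / √t)) * exp (-m * t) := by
        rw [integral_const_mul, integral_exp_mul_Ioi hb]
        field_simp

theorem stmt11_general (m α t : ℝ) (hm : 0 < m) (ht : 1 ≤ t) :
    (∫ u in Ioi (t ^ α), (u ^ 2 + t ^ 2) ^ (-(1/4) : ℝ) * exp (-m * sqrt (u ^ 2 + t ^ 2)))
      ≤ (exp m / m) * exp (-m * t ^ (α - 1/2)) * exp (-m * t) := by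
  have ht0 : 0 < t := by linarith
  have hexponent : t ^ α / √t = t ^ (α - 1/2) := by
    rw [rpow_sub ht0, sqrt_eq_rpow]
  simpa only [hexponent] using integral_Ioi_le_of_nonneg hm ht (rpow_nonneg ht0.le α)

/-- For `m > 0`, `α > 1/2` and `t ≥ 1`:
`∫_{t^α}^∞ (u² + t²)^{-1/4} e^{-m√(u²+t²)} du ≤ (e^m/m) e^{-m t^{α−1/2}} e^{-mt}`. -/
theorem stmt11 (m α t : ℝ) (hm : 0 < m) (hα : 1/2 < α) (ht : 1 ≤ t) :
    (∫ u in Ioi (t ^ α), (u ^ 2 + t ^ 2) ^ (-(1/4) : ℝ) * exp (-m * sqrt (u ^ 2 + t ^ 2)))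
      ≤ (exp m / m) * exp (-m * t ^ (α - 1/2)) * exp (-m * t) :=
  stmt11_general m α t hm ht
end
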